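/- Let m ≥ 1, let σ be a bell-regular sigmoidal function of class D(m), let r ∈ ℕ, and let Φ⃗ = (φ_1,…,φ_r) be a tuple of Orlicz functions. Then for every continuous function f : [−1,1]^r → ℝ and every λ > 0, lim_{n→∞} I^{Φ⃗}[λ (K_n f − f)] = 0. -/

import Mathlib

open MeasureTheory Filter Set
open scoped ENNReal BigOperators

noncomputable section

/-- The density function `Ψ_σ(x) := (σ(x+1) − σ(x−1))/2` of a sigmoidal function `σ`. -/
def Psi (σ : ℝ → ℝ) (x : ℝ) : ℝ := (σ (x + 1) - σ (x - 1)) / 2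

/-- A sigmoidal function of class `D(m)`: measurable, non-decreasing, `σ(x) = 0` for `x ≤ −m`
and `σ(x) = 1` for `x ≥ m`. -/
def SigmoidalD (m : ℝ) (σ : ℝ → ℝ) : Prop :=
  Measurable σ ∧ Monotone σ ∧ (∀ x, x ≤ -m → σ x = 0) ∧ (∀ x, m ≤ x → σ x = 1)

/-- `σ` is bell-regular: `Ψ_σ` is non-decreasing on `(−∞,0]`, non-increasing on `[0,∞)`,
and `Ψ_σ(2) > 0`. -/
def BellRegular (σ : ℝ → ℝ) : Prop :=
  MonotoneOn (Psi σ) (Set.Iic 0) ∧ AntitoneOn (Psi σ) (Set.Ici 0) ∧ 0 < Psi σ 2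

/-- The multivariate Kantorovich-type neural network operator `K_n(f,x)`. -/
def Kop (σ : ℝ → ℝ) (r n : ℕ) (f : (Fin r → ℝ) → ℝ) (x : Fin r → ℝ) : ℝ :=
  (∑ k ∈ Fintype.piFinset (fun _ : Fin r => Finset.Icc (-(n : ℤ)) ((n : ℤ) - 1)),
      (((n : ℝ) ^ r *
          ∫ t in Set.univ.pi (fun j => Set.Icc ((k j : ℝ) / (n : ℝ)) (((k j : ℝ) + 1) / (n : ℝ))),
            f t) *
        ∏ i, Psi σ ((n : ℝ) * x i - (k i : ℝ)))) /
  (∑ k ∈ Fintype.piFinset (fun _ : Fin r => Finset.Icc (-(n : ℤ)) ((n : ℤ) - 1)),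
      ∏ i, Psi σ ((n : ℝ) * x i - (k i : ℝ)))

/-- The mixed Lebesgue norm `‖f‖_{P⃗}` (valued in `ℝ≥0∞`) on the cube `[−1,1]^r`:
innermost variable integrated with exponent `p 0`, outermost with exponent `p (r-1)`. -/
def mixedNormE : (r : ℕ) → (Fin r → ℝ) → ((Fin r → ℝ) → ℝ) → ℝ≥0∞
  | 0, _, f => ENNReal.ofReal |f (fun i => i.elim0)|
  | r + 1, p, f =>
      (∫⁻ t in Set.Icc (-1 : ℝ) 1,
          (mixedNormE r (fun i => p i.castSucc) (fun y => f (Fin.snoc y t))) ^ (p (Fin.last r))) ^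
        (1 / p (Fin.last r))

/-- Membership in the mixed norm Lebesgue space `L^{P⃗}([−1,1]^r)`. -/
def MemMixedLp (r : ℕ) (p : Fin r → ℝ) (f : (Fin r → ℝ) → ℝ) : Prop :=
  Measurable f ∧ mixedNormE r p f < ⊤

/-- An Orlicz function: continuous, convex, non-decreasing on `[0,∞)`, vanishing at `0`,
tending to `∞` at `∞`. -/
def OrliczFun (φ : ℝ → ℝ) : Prop :=
  ContinuousOn φ (Set.Ici 0) ∧ ConvexOn ℝ (Set.Ici 0) φ ∧ MonotoneOn φ (Set.Ici 0) ∧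
    φ 0 = 0 ∧ Tendsto φ atTop atTop

/-- Extension of an Orlicz function to `ℝ≥0∞`. -/
def eext (φ : ℝ → ℝ) (v : ℝ≥0∞) : ℝ≥0∞ :=
  if v = ⊤ then ⊤ else ENNReal.ofReal (φ v.toReal)

/-- The mixed modular `I^{Φ⃗}[f]` (valued in `ℝ≥0∞`) on the cube `[−1,1]^r`. -/
def mixedModularE : (r : ℕ) → (Fin r → ℝ → ℝ) → ((Fin r → ℝ) → ℝ) → ℝ≥0∞
  | 0, _, f => ENNReal.ofReal |f (fun i => i.elim0)|
  | r + 1, Φ, f =>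
      ∫⁻ t in Set.Icc (-1 : ℝ) 1,
        eext (Φ (Fin.last r)) (mixedModularE r (fun i => Φ i.castSucc) (fun y => f (Fin.snoc y t)))

/-- Membership in the mixed norm Orlicz space `L^{Φ⃗}([−1,1]^r)`. -/
def MemMixedOrlicz (r : ℕ) (Φ : Fin r → ℝ → ℝ) (f : (Fin r → ℝ) → ℝ) : Prop :=
  Measurable f ∧ ∃ lam > (0 : ℝ), mixedModularE r Φ (fun x => lam * f x) < ⊤

/-- The Luxemburg norm on the mixed norm Orlicz space. -/
def luxNorm (r : ℕ) (Φ : Fin r → ℝ → ℝ) (f : (Fin r → ℝ) → ℝ) : ℝ :=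
  sInf {lam : ℝ | 0 < lam ∧ mixedModularE r Φ (fun x => f x / lam) ≤ 1}

/-- The cube `[−1,1]^r`. -/
def cube (r : ℕ) : Set (Fin r → ℝ) := Set.univ.pi fun _ => Set.Icc (-1 : ℝ) 1


lemma psi_nonneg {m : ℝ} {σ : ℝ → ℝ} (hσ : SigmoidalD m σ) (x : ℝ) : 0 ≤ Psi σ x := by
  have := hσ.2.1 (show x - 1 ≤ x + 1 by linarith)
  simp only [Psi]; linarith

lemma psi_eq_zero {m : ℝ} {σ : ℝ → ℝ} (hσ : SigmoidalD m σ) {x : ℝ}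
    (hx : m + 1 ≤ |x|) : Psi σ x = 0 := by
  rcases le_abs.mp hx with h | h
  · have h1 : σ (x + 1) = 1 := hσ.2.2.2 _ (by linarith)
    have h2 : σ (x - 1) = 1 := hσ.2.2.2 _ (by linarith)
    simp [Psi, h1, h2]
  · have h1 : σ (x + 1) = 0 := hσ.2.2.1 _ (by linarith)
    have h2 : σ (x - 1) = 0 := hσ.2.2.1 _ (by linarith)
    simp [Psi, h1, h2]

lemma psi_ge {σ : ℝ → ℝ} (hbell : BellRegular σ) {t : ℝ} (h0 : 0 ≤ t) (h2 : t ≤ 2) :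
    Psi σ 2 ≤ Psi σ t :=
  hbell.2.1 h0 (by norm_num : (2:ℝ) ∈ Set.Ici (0:ℝ)) h2

lemma sum_div_bound {κ : Type*} (S : Finset κ) (a b : κ → ℝ) (fx ε : ℝ)
    (hD : 0 < ∑ k ∈ S, b k)
    (hterm : ∀ k ∈ S, |(a k - fx) * b k| ≤ ε * b k) :
    |(∑ k ∈ S, a k * b k) / (∑ k ∈ S, b k) - fx| ≤ ε := by
  have hDne : (∑ k ∈ S, b k) ≠ 0 := ne_of_gt hD
  have heq : (∑ k ∈ S, a k * b k) / (∑ k ∈ S, b k) - fx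
      = (∑ k ∈ S, (a k - fx) * b k) / (∑ k ∈ S, b k) := by
    rw [Finset.sum_congr rfl (fun k _ => sub_mul (a k) fx (b k)), Finset.sum_sub_distrib]
    rw [eq_div_iff hDne, sub_mul, div_mul_cancel₀ _ hDne, Finset.mul_sum,
      Finset.sum_congr rfl (fun k (_ : k ∈ S) => mul_comm fx (b k))]
  rw [heq, abs_div, abs_of_pos hD, div_le_iff₀ hD]
  calc |∑ k ∈ S, (a k - fx) * b k| ≤ ∑ k ∈ S, |(a k - fx) * b k| :=
        Finset.abs_sum_le_sum_abs _ _
    _ ≤ ∑ k ∈ S, ε * b k := Finset.sum_le_sum hterm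
    _ = ε * ∑ k ∈ S, b k := by rw [Finset.mul_sum]

lemma kop_approx (m : ℝ) (hm : 1 ≤ m) (σ : ℝ → ℝ) (hσ : SigmoidalD m σ)
    (hbell : BellRegular σ) (r : ℕ) (f : (Fin r → ℝ) → ℝ)
    (hf : ContinuousOn f (cube r)) {ε : ℝ} (hε : 0 < ε) :
    ∃ N : ℕ, ∀ n ≥ N, ∀ x ∈ cube r, |Kop σ r n f x - f x| ≤ ε := by
  have hcomp : IsCompact (cube r) := isCompact_univ_pi fun _ => isCompact_Icc
  have hu := hcomp.uniformContinuousOn_of_continuous hf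
  rw [Metric.uniformContinuousOn_iff] at hu
  obtain ⟨δ, hδpos, hδ⟩ := hu ε hε
  obtain ⟨N, hNgt⟩ := exists_nat_gt (max 1 ((m + 2) / δ))
  refine ⟨N, fun n hn x hx => ?_⟩
  have hnN : (N : ℝ) ≤ (n : ℝ) := Nat.cast_le.mpr hn
  have hn1 : (1 : ℝ) ≤ (n : ℝ) := le_trans ((le_max_left _ _).trans hNgt.le) hnN
  have hnpos : (0:ℝ) < n := by linarith
  have hmdist : (m + 2) / (n : ℝ) < δ := by
    have h1 : (m + 2) / δ < (n : ℝ) := lt_of_lt_of_le ((le_max_right _ _).trans_lt hNgt) hnN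
    rw [div_lt_iff₀ hδpos] at h1
    rw [div_lt_iff₀ hnpos]
    linarith
  have hxi : ∀ i, x i ∈ Set.Icc (-1:ℝ) 1 := fun i => hx i (Set.mem_univ i)
  -- the chosen index kstar
  set ks : Fin r → ℤ := fun i => min ⌊(n:ℝ) * x i⌋ ((n:ℤ) - 1) with hksdef
  have hnxge : ∀ i, -(n:ℝ) ≤ (n:ℝ) * x i := by
    intro i; nlinarith [(hxi i).1]
  have hnxle : ∀ i, (n:ℝ) * x i ≤ (n:ℝ) := by
    intro i; nlinarith [(hxi i).2]
  have hks_mem : ks ∈ Fintype.piFinset (fun _ : Fin r => Finset.Icc (-(n : ℤ)) ((n : ℤ) - 1)) := by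
    rw [Fintype.mem_piFinset]
    intro i
    rw [Finset.mem_Icc]
    constructor
    · apply le_min
      · rw [Int.le_floor]; push_cast; exact hnxge i
      · have : (1:ℝ) ≤ (n:ℝ) := hn1
        have : (1:ℤ) ≤ (n:ℤ) := by exact_mod_cast this
        omega
    · exact min_le_right _ _
  have hks_range : ∀ i, 0 ≤ (n:ℝ) * x i - (ks i : ℝ) ∧ (n:ℝ) * x i - (ks i : ℝ) ≤ 2 := by
    intro i
    rcases le_or_gt (⌊(n:ℝ) * x i⌋) ((n:ℤ)-1) with h | h
    · have hki : ks i = ⌊(n:ℝ) * x i⌋ := min_eq_left h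
      rw [hki]
      constructor
      · linarith [Int.floor_le ((n:ℝ) * x i)]
      · linarith [Int.lt_floor_add_one ((n:ℝ) * x i)]
    · have hki : ks i = (n:ℤ) - 1 := min_eq_right h.le
      have hfl : ((n:ℤ) : ℝ) ≤ ⌊(n:ℝ) * x i⌋ := by exact_mod_cast (by omega : (n:ℤ) ≤ ⌊(n:ℝ) * x i⌋)
      have h2 : ((n:ℤ):ℝ) ≤ (n:ℝ) * x i := hfl.trans (Int.floor_le _)
      rw [hki]
      push_cast at h2 ⊢
      constructor <;> [linarith [hnxle i]; linarith [hnxle i]]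
  -- denominator bound
  have hPnonneg : ∀ k : Fin r → ℤ, 0 ≤ ∏ i, Psi σ ((n : ℝ) * x i - (k i : ℝ)) :=
    fun k => Finset.prod_nonneg fun i _ => psi_nonneg hσ _
  have hPks : Psi σ 2 ^ r ≤ ∏ i, Psi σ ((n : ℝ) * x i - (ks i : ℝ)) := by
    calc Psi σ 2 ^ r = ∏ _i : Fin r, Psi σ 2 := by
          rw [Finset.prod_const, Finset.card_univ, Fintype.card_fin]
      _ ≤ ∏ i, Psi σ ((n : ℝ) * x i - (ks i : ℝ)) :=
          Finset.prod_le_prod (fun i _ => hbell.2.2.le)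
            (fun i _ => psi_ge hbell (hks_range i).1 (hks_range i).2)
  have hDpos : 0 < ∑ k ∈ Fintype.piFinset (fun _ : Fin r => Finset.Icc (-(n : ℤ)) ((n : ℤ) - 1)),
      ∏ i, Psi σ ((n : ℝ) * x i - (k i : ℝ)) :=
    lt_of_lt_of_le (pow_pos hbell.2.2 r)
      (hPks.trans (Finset.single_le_sum (fun k _ => hPnonneg k) hks_mem))
  -- term bound
  unfold Kop
  apply sum_div_bound _ _ _ _ _ hDpos
  intro k hk
  rcases (hPnonneg k).eq_or_lt with h0 | hpos
  · rw [← h0, mul_zero, mul_zero, abs_zero]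
  have hfac : ∀ i, |(n:ℝ) * x i - (k i : ℝ)| < m + 1 := by
    intro i
    by_contra hcon
    push_neg at hcon
    have hz : Psi σ ((n:ℝ) * x i - (k i : ℝ)) = 0 := psi_eq_zero hσ hcon
    have : (∏ i, Psi σ ((n : ℝ) * x i - (k i : ℝ))) = 0 :=
      Finset.prod_eq_zero (Finset.mem_univ i) hz
    rw [this] at hpos; exact lt_irrefl 0 hpos
  have hkmem : ∀ i, -(n:ℤ) ≤ k i ∧ k i ≤ (n:ℤ) - 1 := fun i =>
    Finset.mem_Icc.mp (Fintype.mem_piFinset.mp hk i)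
  set I : Set (Fin r → ℝ) :=
    Set.univ.pi (fun j => Set.Icc ((k j : ℝ) / (n : ℝ)) (((k j : ℝ) + 1) / (n : ℝ))) with hIdef
  have hsub : I ⊆ cube r := by
    intro t ht i _
    have hti := ht i (Set.mem_univ i)
    have hk1 : (-(n:ℝ)) ≤ (k i : ℝ) := by exact_mod_cast (hkmem i).1
    have hk2 : (k i : ℝ) + 1 ≤ (n:ℝ) := by
      have : (k i : ℝ) ≤ (n:ℝ) - 1 := by exact_mod_cast (hkmem i).2
      linarith
    constructor
    · have : (-1:ℝ) ≤ (k i : ℝ) / (n:ℝ) := by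
        rw [le_div_iff₀ hnpos]; linarith
      exact this.trans hti.1
    · have : ((k i : ℝ) + 1) / (n:ℝ) ≤ 1 := by
        rw [div_le_one hnpos]; linarith
      exact hti.2.trans this
  have hIm : MeasurableSet I := MeasurableSet.univ_pi fun j => measurableSet_Icc
  have hIc : IsCompact I := isCompact_univ_pi fun j => isCompact_Icc
  have hvol : volume I = ENNReal.ofReal ((1:ℝ)/(n:ℝ)) ^ r := by
    rw [hIdef, volume_pi_pi]
    have hv : ∀ j : Fin r, volume (Set.Icc ((k j : ℝ) / (n:ℝ)) (((k j : ℝ) + 1) / (n:ℝ)))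
        = ENNReal.ofReal ((1:ℝ)/(n:ℝ)) := by
      intro j
      rw [Real.volume_Icc]
      congr 1
      field_simp
      ring
    rw [Finset.prod_congr rfl (fun j _ => hv j), Finset.prod_const, Finset.card_univ,
      Fintype.card_fin]
  have hvfin : volume I < ⊤ := by
    rw [hvol]; exact ENNReal.pow_lt_top ENNReal.ofReal_lt_top
  have hvtr : (volume I).toReal = ((1:ℝ)/(n:ℝ))^r := by
    rw [hvol, ENNReal.toReal_pow, ENNReal.toReal_ofReal (by positivity)]
  -- pointwise bound
  have hptb : ∀ t ∈ I, ‖f t - f x‖ ≤ ε := by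
    intro t ht
    have hdist : dist t x ≤ (m + 2) / (n:ℝ) := by
      rw [dist_pi_le_iff (by positivity)]
      intro i
      have hti := ht i (Set.mem_univ i)
      rw [Real.dist_eq]
      have h1 : |t i - (k i : ℝ)/(n:ℝ)| ≤ 1/(n:ℝ) := by
        rw [abs_le]
        constructor
        · have := hti.1; linarith [one_div_pos.mpr hnpos |>.le]
        · have := hti.2
          have heq : ((k i : ℝ) + 1)/(n:ℝ) = (k i : ℝ)/(n:ℝ) + 1/(n:ℝ) := by ring
          rw [heq] at this; linarith
      have h2 : |x i - (k i : ℝ)/(n:ℝ)| ≤ (m+1)/(n:ℝ) := by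
        have heq : x i - (k i : ℝ)/(n:ℝ) = ((n:ℝ) * x i - (k i : ℝ))/(n:ℝ) := by
          field_simp
        rw [heq, abs_div, abs_of_pos hnpos]
        gcongr
        exact (hfac i).le
      calc |t i - x i| ≤ |t i - (k i : ℝ)/(n:ℝ)| + |x i - (k i : ℝ)/(n:ℝ)| := by
            rw [show t i - x i = (t i - (k i : ℝ)/(n:ℝ)) - (x i - (k i : ℝ)/(n:ℝ)) by ring]
            exact abs_sub _ _
        _ ≤ 1/(n:ℝ) + (m+1)/(n:ℝ) := add_le_add h1 h2
        _ = (m+2)/(n:ℝ) := by ring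
    have := hδ t (hsub ht) x hx (lt_of_le_of_lt hdist hmdist)
    rw [Real.dist_eq] at this
    exact this.le
  have hint : IntegrableOn f I := (hf.mono hsub).integrableOn_compact hIc
  have hintc : IntegrableOn (fun _ => f x) I := by
    exact integrableOn_const hvfin.ne
  have hsubint : ∫ t in I, (f t - f x) = (∫ t in I, f t) - f x * (volume I).toReal := by
    rw [integral_sub hint hintc, setIntegral_const, smul_eq_mul, mul_comm, measureReal_def]
  have hbound : ‖∫ t in I, (f t - f x)‖ ≤ ε * (volume I).toReal :=
    norm_setIntegral_le_of_norm_le_const hvfin hptb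
  have hnr : (n:ℝ)^r * (volume I).toReal = 1 := by
    rw [hvtr, ← mul_pow]
    rw [mul_one_div, div_self (ne_of_gt hnpos), one_pow]
  have hAk : ((n : ℝ) ^ r * ∫ t in I, f t) - f x = (n:ℝ)^r * ∫ t in I, (f t - f x) := by
    rw [hsubint, mul_sub]
    congr 1
    rw [← mul_assoc, mul_comm ((n:ℝ)^r) (f x), mul_assoc, hnr, mul_one]
  have habs : |((n : ℝ) ^ r * ∫ t in I, f t) - f x| ≤ ε := by
    rw [hAk, abs_mul, abs_of_nonneg (pow_nonneg hnpos.le r)]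
    calc (n:ℝ)^r * |∫ t in I, (f t - f x)| ≤ (n:ℝ)^r * (ε * (volume I).toReal) := by
          apply mul_le_mul_of_nonneg_left _ (pow_nonneg hnpos.le r)
          exact hbound
      _ = ε * ((n:ℝ)^r * (volume I).toReal) := by ring
      _ = ε := by rw [hnr, mul_one]
  rw [abs_mul, abs_of_nonneg (hPnonneg k)]
  exact mul_le_mul_of_nonneg_right habs (hPnonneg k)

lemma modular_small : ∀ (r : ℕ) (Φ : Fin r → ℝ → ℝ), (∀ i, OrliczFun (Φ i)) →
    ∀ η > (0:ℝ), ∃ ε > (0:ℝ), ∀ g : (Fin r → ℝ) → ℝ,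
      (∀ x ∈ cube r, |g x| ≤ ε) → mixedModularE r Φ g ≤ ENNReal.ofReal η := by
  intro r
  induction r with
  | zero =>
    intro Φ _ η hη
    refine ⟨η, hη, fun g hg => ?_⟩
    have hmem : (fun i : Fin 0 => i.elim0) ∈ cube 0 := fun i _ => i.elim0
    simp only [mixedModularE]
    exact ENNReal.ofReal_le_ofReal (hg _ hmem)
  | succ r ih =>
    intro Φ hΦ η hη
    obtain ⟨hcont, -, hmono, h0, -⟩ := hΦ (Fin.last r)
    have hc0 : ContinuousWithinAt (Φ (Fin.last r)) (Set.Ici 0) 0 := hcont 0 Set.self_mem_Ici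
    rw [Metric.continuousWithinAt_iff] at hc0
    obtain ⟨δ0, hδ0, hδball⟩ := hc0 (η/2) (by linarith)
    set δ : ℝ := δ0/2 with hδdef
    have hδpos : 0 < δ := by positivity
    have hφδ : Φ (Fin.last r) δ ≤ η/2 := by
      have hd : dist δ 0 < δ0 := by
        rw [Real.dist_eq, sub_zero, abs_of_pos hδpos]; simp only [hδdef]; linarith
      have := hδball hδpos.le hd
      rw [Real.dist_eq, h0, sub_zero] at this
      exact (le_abs_self _).trans this.le
    obtain ⟨ε, hεpos, hε⟩ := ih (fun i => Φ i.castSucc) (fun i => hΦ i.castSucc) δ hδpos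
    refine ⟨ε, hεpos, fun g hg => ?_⟩
    simp only [mixedModularE]
    have key : ∀ t ∈ Set.Icc (-1:ℝ) 1,
        eext (Φ (Fin.last r))
          (mixedModularE r (fun i => Φ i.castSucc) (fun y => g (Fin.snoc y t)))
        ≤ ENNReal.ofReal (η/2) := by
      intro t ht
      have hin : mixedModularE r (fun i => Φ i.castSucc) (fun y => g (Fin.snoc y t))
          ≤ ENNReal.ofReal δ := by
        apply hε
        intro y hy
        apply hg
        intro i _
        refine Fin.lastCases ?_ ?_ i
        · rw [Fin.snoc_last]; exact ht
        · intro j; rw [Fin.snoc_castSucc]; exact hy j (Set.mem_univ j)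
      have hne : mixedModularE r (fun i => Φ i.castSucc) (fun y => g (Fin.snoc y t)) ≠ ⊤ :=
        ne_top_of_le_ne_top ENNReal.ofReal_ne_top hin
      rw [eext, if_neg hne]
      apply ENNReal.ofReal_le_ofReal
      have htr : (mixedModularE r (fun i => Φ i.castSucc) (fun y => g (Fin.snoc y t))).toReal ≤ δ :=
        ENNReal.toReal_le_of_le_ofReal hδpos.le hin
      exact (hmono ENNReal.toReal_nonneg hδpos.le htr).trans hφδ
    calc (∫⁻ t in Set.Icc (-1:ℝ) 1, eext (Φ (Fin.last r))
            (mixedModularE r (fun i => Φ i.castSucc) (fun y => g (Fin.snoc y t))))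
        ≤ ∫⁻ _ in Set.Icc (-1:ℝ) 1, ENNReal.ofReal (η/2) :=
          setLIntegral_mono measurable_const key
      _ = ENNReal.ofReal (η/2) * volume (Set.Icc (-1:ℝ) 1) := setLIntegral_const _ _
      _ = ENNReal.ofReal η := by
          rw [Real.volume_Icc, ← ENNReal.ofReal_mul (by linarith)]
          norm_num

/-- for every continuous `f` on `[−1,1]^r` and every `λ > 0`,
`I^{Φ⃗}[λ (K_n f − f)] → 0` as `n → ∞`. -/
theorem statement6 (m : ℝ) (hm : 1 ≤ m) (σ : ℝ → ℝ)
    (hσ : SigmoidalD m σ) (hbell : BellRegular σ)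
    (r : ℕ) (Φ : Fin r → ℝ → ℝ) (hΦ : ∀ i, OrliczFun (Φ i))
    (f : (Fin r → ℝ) → ℝ) (hf : ContinuousOn f (cube r))
    (lam : ℝ) (hlam : 0 < lam) :
    Tendsto (fun n : ℕ => mixedModularE r Φ (fun x => lam * (Kop σ r n f x - f x)))
      atTop (nhds 0) := by
  rw [ENNReal.tendsto_atTop_zero]
  intro ε hε
  obtain ⟨η, hηpos, hηle⟩ : ∃ η : ℝ, 0 < η ∧ ENNReal.ofReal η ≤ ε := by
    rcases eq_or_ne ε ⊤ with rfl | hne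
    · exact ⟨1, one_pos, le_top⟩
    · exact ⟨ε.toReal, ENNReal.toReal_pos (ne_of_gt hε) hne,
        by rw [ENNReal.ofReal_toReal hne]⟩
  obtain ⟨δ, hδpos, hδ⟩ := modular_small r Φ hΦ η hηpos
  obtain ⟨N, hN⟩ := kop_approx m hm σ hσ hbell r f hf (show (0:ℝ) < δ / lam by positivity)
  refine ⟨N, fun n hn => le_trans (hδ _ fun x hx => ?_) hηle⟩
  rw [abs_mul, abs_of_pos hlam]
  calc lam * |Kop σ r n f x - f x| ≤ lam * (δ / lam) :=
        mul_le_mul_of_nonneg_left (hN n hn x hx) hlam.le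
    _ = δ := by field_simp

end
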